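/- Let Ω ⊆ ℝ³ be a measurable set of finite measure, let c > 0, π > 0, α ≥ 1, C ≥ 0, and let W : ℝ^{3×3} → [0, +∞] be a Borel function satisfying W(F) ≥ c(det F − 1)² for every F with |det F − 1| ≤ 1. Then there exists a constant C' ≥ 0, depending only on c, π, C and the measure of Ω, such that: for every h ∈ (0,1] and every measurable M : Ω → ℝ^{3×3} with W∘M integrable, det∘M − 1 integrable, det M(x) > 0 for a.e. x ∈ Ω, and ∫_Ω W(M(x)) dx + h^α π ∫_Ω (det M(x) − 1) dx ≤ C h^{2α}, one has ∫_Ω W(M(x)) dx ≤ C' h^{2α} and ∫_{{x ∈ Ω : |det M(x) − 1| ≤ 1}} (det M(x) − 1)² dx ≤ C' h^{2α}. -/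

import Mathlib

/-!
Write `f = det M - 1` and `E = ∫ W(M)`. Orientation preservation gives `f > -1`, so `f > 1` wherever
`|f| > 1` and the pressure term can only be negative on `{|f| ≤ 1}`. There Young's inequality
`h^α π |f| ≤ (c/2) f² + π² h^{2α} / (2c)` bounds it, and `c f² ≤ W(M)` absorbs the quadratic part
into `E / 2`. Hence `E ≤ (2C + π² |Ω| / c) h^{2α}`, and `c ∫_{|f| ≤ 1} f² ≤ E` gives the second bound.
-/

open MeasureTheory
open scoped ENNReal

noncomputable section

instance : MeasurableSpace (Matrix (Fin 3) (Fin 3) ℝ) :=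
  (inferInstance : MeasurableSpace (Fin 3 → Fin 3 → ℝ))

instance : BorelSpace (Matrix (Fin 3) (Fin 3) ℝ) :=
  (inferInstance : BorelSpace (Fin 3 → Fin 3 → ℝ))

lemma neg_mul_le_half_mul_sq_add_sq_div {c : ℝ} (hc : 0 < c) (a y : ℝ) :
    -(a * y) ≤ c / 2 * y ^ 2 + a ^ 2 / (2 * c) := by
  have key : c / 2 * y ^ 2 + a ^ 2 / (2 * c) + a * y = (c * y + a) ^ 2 / (2 * c) := by
    field_simp
    ring
  have : 0 ≤ (c * y + a) ^ 2 / (2 * c) := by positivity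
  linarith

namespace MeasureTheory

variable {X : Type*} [MeasurableSpace X] {μ : Measure X}

lemma setIntegral_le_toReal_lintegral {s : Set X} (hs : MeasurableSet s) {φ : X → ℝ}
    {g : X → ℝ≥0∞} (hφm : AEStronglyMeasurable φ (μ.restrict s)) (hφ0 : ∀ x, 0 ≤ φ x)
    (hg : ∫⁻ x, g x ∂μ ≠ ∞) (hφg : ∀ x ∈ s, ENNReal.ofReal (φ x) ≤ g x) :
    ∫ x in s, φ x ∂μ ≤ (∫⁻ x, g x ∂μ).toReal := by
  rw [integral_eq_lintegral_of_nonneg_ae (ae_of_all _ hφ0) hφm]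
  exact ENNReal.toReal_mono hg
    ((setLIntegral_mono' hs hφg).trans (setLIntegral_le_lintegral s g))

lemma integrableOn_sq_of_abs_le_one [IsFiniteMeasure μ] {f : X → ℝ} (hf : Measurable f) :
    IntegrableOn (fun x ↦ f x ^ 2) {x | |f x| ≤ 1} μ := by
  refine IntegrableOn.of_bound (measure_lt_top _ _) (hf.pow_const 2).aestronglyMeasurable 1 ?_
  filter_upwards [ae_restrict_mem (measurableSet_le hf.abs measurable_const)] with x hx
  simpa [abs_le] using hx

lemma setIntegral_abs_le_one_le_integral {f : X → ℝ} (hf : Measurable f) (hfi : Integrable f μ)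
    (hf_gt : ∀ᵐ x ∂μ, -1 < f x) :
    ∫ x in {x | |f x| ≤ 1}, f x ∂μ ≤ ∫ x, f x ∂μ := by
  have ht : MeasurableSet {x | |f x| ≤ 1} := measurableSet_le hf.abs measurable_const
  have hcompl : 0 ≤ ∫ x in {x | |f x| ≤ 1}ᶜ, f x ∂μ := by
    refine setIntegral_nonneg_of_ae_restrict ?_
    filter_upwards [ae_restrict_of_ae hf_gt, ae_restrict_mem ht.compl] with x hgt hx
    have : 1 < |f x| := lt_of_not_ge hx
    rw [lt_abs] at this
    show 0 ≤ f x
    rcases this with h | h <;> linarith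
  linarith [integral_add_compl ht hfi]

lemma le_of_add_mul_integral_le [IsFiniteMeasure μ] {f : X → ℝ} (hf : Measurable f)
    (hfi : Integrable f μ) (hf_gt : ∀ᵐ x ∂μ, -1 < f x) {E a B c : ℝ} (hc : 0 < c) (ha : 0 ≤ a)
    (hcE : c * ∫ x in {x | |f x| ≤ 1}, f x ^ 2 ∂μ ≤ E) (hEB : E + a * ∫ x, f x ∂μ ≤ B) :
    E ≤ 2 * B + a ^ 2 / c * μ.real Set.univ := by
  set t := {x | |f x| ≤ 1}
  have hsq := integrableOn_sq_of_abs_le_one (μ := μ) hf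
  have hyoung : -(a * ∫ x in t, f x ∂μ)
      ≤ c / 2 * ∫ x in t, f x ^ 2 ∂μ + a ^ 2 / (2 * c) * μ.real t := by
    calc -(a * ∫ x in t, f x ∂μ) = ∫ x in t, -(a * f x) ∂μ := by
          rw [integral_neg, integral_const_mul]
      _ ≤ ∫ x in t, (c / 2 * f x ^ 2 + a ^ 2 / (2 * c)) ∂μ :=
          integral_mono (hfi.integrableOn.const_mul a).neg
            ((hsq.const_mul _).add integrableOn_const)
            fun x ↦ neg_mul_le_half_mul_sq_add_sq_div hc a (f x)
      _ = c / 2 * ∫ x in t, f x ^ 2 ∂μ + a ^ 2 / (2 * c) * μ.real t := by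
          rw [integral_add (hsq.const_mul _) integrableOn_const, integral_const_mul,
            setIntegral_const, smul_eq_mul, mul_comm (μ.real t)]
  have hmono : a * ∫ x in t, f x ∂μ ≤ a * ∫ x, f x ∂μ :=
    mul_le_mul_of_nonneg_left (setIntegral_abs_le_one_le_integral hf hfi hf_gt) ha
  have hvol : a ^ 2 / (2 * c) * μ.real t ≤ a ^ 2 / (2 * c) * μ.real Set.univ :=
    mul_le_mul_of_nonneg_left (measureReal_mono (Set.subset_univ t)) (by positivity)
  rw [show a ^ 2 / c = 2 * (a ^ 2 / (2 * c)) by field_simp]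
  linarith

end MeasureTheory

theorem stmt5 (Ω : Set (Fin 3 → ℝ)) (hΩfin : volume Ω < ⊤)
    (c π α C : ℝ) (hc : 0 < c) (hπ : 0 < π) (hC : 0 ≤ C)
    (W : Matrix (Fin 3) (Fin 3) ℝ → ℝ≥0∞)
    (hW : ∀ F : Matrix (Fin 3) (Fin 3) ℝ, |F.det - 1| ≤ 1 →
      ENNReal.ofReal (c * (F.det - 1) ^ 2) ≤ W F) :
    ∃ C' : ℝ, 0 ≤ C' ∧
      ∀ h : ℝ, h ∈ Set.Ioc (0 : ℝ) 1 →
      ∀ M : (Fin 3 → ℝ) → Matrix (Fin 3) (Fin 3) ℝ, Measurable M →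
        (∫⁻ x in Ω, W (M x) ∂volume) ≠ ⊤ →
        IntegrableOn (fun x => (M x).det - 1) Ω volume →
        (∀ᵐ x ∂(volume.restrict Ω), 0 < (M x).det) →
        (∫⁻ x in Ω, W (M x) ∂volume).toReal
            + h ^ α * π * (∫ x in Ω, ((M x).det - 1) ∂volume) ≤ C * h ^ (2 * α) →
        (∫⁻ x in Ω, W (M x) ∂volume).toReal ≤ C' * h ^ (2 * α) ∧
        (∫ x in Ω ∩ {x | |(M x).det - 1| ≤ 1}, ((M x).det - 1) ^ 2 ∂volume)
          ≤ C' * h ^ (2 * α) := by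
  have : IsFiniteMeasure (volume.restrict Ω) := isFiniteMeasure_restrict.2 hΩfin.ne
  set K := 2 * C + π ^ 2 / c * volume.real Ω
  refine ⟨K * (1 + 1 / c), by positivity, ?_⟩
  rintro h ⟨hh, -⟩ M hM hWfin hfi hdet hEB
  set E := (∫⁻ x in Ω, W (M x) ∂volume).toReal
  set f := fun x ↦ (M x).det - 1
  have hf : Measurable f := (continuous_id.matrix_det.measurable.comp hM).sub_const 1
  have ht : MeasurableSet {x | |f x| ≤ 1} := measurableSet_le hf.abs measurable_const
  have hcE : c * ∫ x in {x | |f x| ≤ 1}, f x ^ 2 ∂volume.restrict Ω ≤ E := by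
    rw [← integral_const_mul]
    exact setIntegral_le_toReal_lintegral ht ((hf.pow_const 2).const_mul c).aestronglyMeasurable
      (fun x ↦ by positivity) hWfin fun x hx ↦ hW (M x) hx
  have hpow : (h ^ α) ^ 2 = h ^ (2 * α) := by
    rw [mul_comm, ← Real.rpow_mul_natCast hh.le, Nat.cast_ofNat]
  have hEK : E ≤ K * h ^ (2 * α) := by
    have := le_of_add_mul_integral_le hf hfi (hdet.mono fun x hx ↦ by simp [f, hx])
      hc (by positivity : 0 ≤ h ^ α * π) hcE hEB
    rw [measureReal_restrict_apply_univ, mul_pow, hpow] at this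
    calc E ≤ _ := this
      _ = K * h ^ (2 * α) := by ring
  have hKp : 0 ≤ K * h ^ (2 * α) := by positivity
  have hKpc : 0 ≤ K * h ^ (2 * α) / c := by positivity
  have hC'_eq : K * (1 + 1 / c) * h ^ (2 * α) = K * h ^ (2 * α) + K * h ^ (2 * α) / c := by ring
  have hI : ∫ x in {x | |f x| ≤ 1}, f x ^ 2 ∂volume.restrict Ω ≤ K * h ^ (2 * α) / c := by
    rw [le_div_iff₀ hc]
    linarith
  rw [Set.inter_comm, ← Measure.restrict_restrict ht, hC'_eq]
  exact ⟨by linarith, hI.trans (by linarith)⟩
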